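/- If A is a T-EP matrix, then the Moore-Penrose inverse of T* A equals A† T, i.e., (T* A)† = A† T. -/

import Mathlib

/-!
Since `T` is a partial isometry, `T Tᴴ` fixes `range T`; the T-EP condition puts `range A`
inside `range (T Aᴴ T) ⊆ range T`, so `T Tᴴ A = A`. With this identity each Penrose equation
for `(Tᴴ A, A† T)` collapses to the corresponding one for `(A, A†)`.
-/

open Matrix

/-- The four Penrose conditions: `X` is the Moore-Penrose inverse of `A`. -/
def IsMP {m n : ℕ} (A : Matrix (Fin m) (Fin n) ℂ) (X : Matrix (Fin n) (Fin m) ℂ) : Prop :=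
  A * X * A = A ∧ X * A * X = X ∧ (A * X)ᴴ = A * X ∧ (X * A)ᴴ = X * A

/-- `A` is T-EP: range(A) = range(T Aᴴ T) and A = A Tᴴ T. -/
def IsTEP {m n : ℕ} (T A : Matrix (Fin m) (Fin n) ℂ) : Prop :=
  LinearMap.range (Matrix.mulVecLin A) = LinearMap.range (Matrix.mulVecLin (T * Aᴴ * T)) ∧
    A = A * Tᴴ * T

namespace Matrix

variable {R : Type*} [CommSemiring R] {m n k : Type*} [Fintype n] [Fintype k]

theorem range_mulVecLin_mul_le (T : Matrix m k R) (B : Matrix k n R) :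
    LinearMap.range (T * B).mulVecLin ≤ LinearMap.range T.mulVecLin := by
  rw [mulVecLin_mul]
  exact LinearMap.range_comp_le_range _ _

theorem mul_eq_self_of_range_le [Fintype m] {E : Matrix m m R} {T : Matrix m k R}
    {A : Matrix m n R} (hE : E * T = T)
    (hA : LinearMap.range A.mulVecLin ≤ LinearMap.range T.mulVecLin) :
    E * A = A := by
  refine ext_iff_mulVec.mpr fun x => ?_
  obtain ⟨y, hy⟩ := hA ⟨x, rfl⟩
  change T *ᵥ y = A *ᵥ x at hy
  rw [← mulVec_mulVec, ← hy, mulVec_mulVec, hE]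

end Matrix

theorem IsMP.conjTranspose_mul {m n k : ℕ} {A : Matrix (Fin m) (Fin n) ℂ}
    {Ad : Matrix (Fin n) (Fin m) ℂ} (hMP : IsMP A Ad) {T : Matrix (Fin m) (Fin k) ℂ}
    (hTA : T * Tᴴ * A = A) : IsMP (Tᴴ * A) (Ad * T) := by
  obtain ⟨h₁, h₂, h₃, h₄⟩ := hMP
  have hcancel : Ad * T * (Tᴴ * A) = Ad * A := by
    rw [Matrix.mul_assoc, ← Matrix.mul_assoc T, hTA]
  refine ⟨?_, ?_, ?_, ?_⟩
  · rw [Matrix.mul_assoc (Tᴴ * A), hcancel, Matrix.mul_assoc, ← Matrix.mul_assoc A, h₁]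
  · rw [hcancel, ← Matrix.mul_assoc, h₂]
  · have hsandwich : Tᴴ * A * (Ad * T) = Tᴴ * (A * Ad) * T := by
      simp only [Matrix.mul_assoc]
    rw [hsandwich, Matrix.conjTranspose_mul, Matrix.conjTranspose_mul, h₃,
      conjTranspose_conjTranspose, Matrix.mul_assoc Tᴴ]
  · rw [hcancel, h₄]

theorem stmt7 {m n : ℕ} (A T : Matrix (Fin m) (Fin n) ℂ)
    (Ad : Matrix (Fin n) (Fin m) ℂ) (hT : T = T * Tᴴ * T) (hMP : IsMP A Ad)
    (hTEP : IsTEP T A) :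
    IsMP (Tᴴ * A) (Ad * T) := by
  have hrange : LinearMap.range A.mulVecLin ≤ LinearMap.range T.mulVecLin := by
    rw [hTEP.1, Matrix.mul_assoc]
    exact range_mulVecLin_mul_le T _
  exact hMP.conjTranspose_mul (mul_eq_self_of_range_le hT.symm hrange)
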